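/- arXiv:2006.04242 — 5 statements merged into one kernel-verified Lean document; each statement's English description precedes it below -/
import Mathlib

section
/- Let P = {X_i : i ∈ I} be a partition of a set X and f ∈ S(X,P). If χ^(f)(i) = j (i.e., f(X_i) ⊆ X_j) then |X_i| = |X_j| (the blocks X_i and X_j are equinumerous). -/
/-- `B : I → Set X` is a partition of `X`: blocks are nonempty, pairwise disjoint, and cover. -/
def IsPartition {X I : Type*} (B : I → Set X) : Prop :=
  (∀ i, (B i).Nonempty) ∧ (Pairwise fun i j => Disjoint (B i) (B j)) ∧ ∀ x, ∃ i, x ∈ B i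

/-- `f ∈ T(X,P)`: every block maps into some block. -/
def InT {X I : Type*} (B : I → Set X) (f : X → X) : Prop := ∀ i, ∃ j, f '' B i ⊆ B j

/-- `c` is the character `χ^(f)` of `f`: `f(X_i) ⊆ X_{c i}` for every `i`. -/
def IsChar {X I : Type*} (B : I → Set X) (f : X → X) (c : I → I) : Prop :=
  ∀ i, f '' B i ⊆ B (c i)

/-- `f ∈ Σ(X,P)`: `f ∈ T(X,P)` and the image of `f` meets every block. -/
def InSigma {X I : Type*} (B : I → Set X) (f : X → X) : Prop :=
  InT B f ∧ ∀ i, (Set.range f ∩ B i).Nonempty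

/-- `f ∈ S(X,P)`, the group of units of `T(X,P)`: `f` is a bijection and
both `f` and its inverse belong to `T(X,P)`. -/
def InS {X I : Type*} (B : I → Set X) (f : X → X) : Prop :=
  ∃ g : X → X, Function.LeftInverse g f ∧ Function.RightInverse g f ∧ InT B f ∧ InT B g

theorem stmt3 {X I : Type*} (B : I → Set X) (hP : IsPartition B)
    (f : X → X) (hf : InS B f) (c : I → I) (hc : IsChar B f c) :
    ∀ i, Nonempty (B i ≃ B (c i)) := by
  obtain ⟨g, hgf, hfg, hfT, hgT⟩ := hf
  intro i
  obtain ⟨j, hj⟩ := hgT (c i)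
  -- show g maps B (c i) into B i, i.e. j = i
  obtain ⟨x, hx⟩ := hP.1 i
  have hfx : f x ∈ B (c i) := hc i ⟨x, hx, rfl⟩
  have hxj : x ∈ B j := by
    have := hj ⟨f x, hfx, rfl⟩
    rwa [hgf x] at this
  have hji : j = i := by
    by_contra hne
    exact Set.disjoint_left.mp (hP.2.1 hne) hxj hx
  rw [hji] at hj
  exact ⟨{
    toFun := fun y => ⟨f y, hc i ⟨y, y.2, rfl⟩⟩
    invFun := fun y => ⟨g y, hj ⟨y, y.2, rfl⟩⟩
    left_inv := fun y => Subtype.ext (hgf y)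
    right_inv := fun y => Subtype.ext (hfg y) }⟩
end

section
/- Let f be a nonidentity permutation of the finite set X = {1,...,n} (n ≥ 3) which is not an n-cycle. Then there exists a nontrivial partition P of X such that f ∈ S(X,P). -/
/-- `f` sends each block of the partition `P` into some block of `P`. -/
def PreservesPart {α : Type*} (P : Set (Set α)) (f : α → α) : Prop :=
  ∀ b ∈ P, ∃ b' ∈ P, f '' b ⊆ b'

/-- A permutation `f` belongs to `S(X,P)`, the group of units of `T(X,P)`:
both `f` and `f⁻¹` send each block into some block. -/
def InSPart {α : Type*} (P : Set (Set α)) (f : Equiv.Perm α) : Prop :=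
  PreservesPart P f ∧ PreservesPart P f.symm

/-- A partition is nontrivial: it has a non-singleton block and more than one block. -/
def NontrivialPart {α : Type*} (P : Set (Set α)) : Prop :=
  (∃ b ∈ P, ∀ x : α, b ≠ {x}) ∧ ∃ b ∈ P, ∃ b' ∈ P, b ≠ b'

/-- `f` is an `n`-cycle on `Fin n`: a cycle moving every point. -/
def IsFullCycle {n : ℕ} (f : Equiv.Perm (Fin n)) : Prop :=
  f.IsCycle ∧ f.support = Finset.univ

/-! The orbits of `f` (its cycles, fixed points included) form a partition preserved by `f` and
`f⁻¹`. Since `f ≠ 1` some orbit has two points, and since `f` is not an `n`-cycle there are at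
least two orbits: a single orbit containing a moved point would make `f` a cycle without fixed
points. -/

namespace Setoid

variable {α : Type*} {s : Setoid α}

theorem preservesPart_classes {g : α → α} (hg : ∀ x, s (g x) x) : PreservesPart s.classes g := by
  rintro _ ⟨y, rfl⟩
  refine ⟨{x | s x y}, s.mem_classes y, ?_⟩
  rintro _ ⟨x, hx, rfl⟩
  exact s.trans (hg x) hx

theorem nontrivialPart_classes {x y z w : α} (hxy : x ≠ y) (hrxy : s x y) (hzw : ¬ s z w) :
    NontrivialPart s.classes := by
  refine ⟨⟨{v | s v y}, s.mem_classes y, fun v hv => hxy ?_⟩,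
    ⟨{v | s v z}, s.mem_classes z, {v | s v w}, s.mem_classes w, fun h => hzw ?_⟩⟩
  · have hx : x ∈ {v | s v y} := hrxy
    have hy : y ∈ {v | s v y} := s.refl y
    rw [hv] at hx hy
    exact hx.trans hy.symm
  · have hz : z ∈ {v | s v z} := s.refl z
    rwa [h] at hz

end Setoid

namespace Equiv.Perm

variable {α : Type*}

theorem inSPart_sameCycle_classes (f : Perm α) : InSPart (SameCycle.setoid f).classes f :=
  ⟨Setoid.preservesPart_classes fun _ => sameCycle_apply_left.mpr (SameCycle.refl f _),
    Setoid.preservesPart_classes fun _ => sameCycle_symm_apply_left.mpr (SameCycle.refl f _)⟩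

theorem isCycle_and_support_eq_univ_of_forall_sameCycle [Fintype α] [DecidableEq α]
    {f : Perm α} (hf : f ≠ 1) (h : ∀ x y, f.SameCycle x y) :
    f.IsCycle ∧ f.support = Finset.univ := by
  obtain ⟨x, hx⟩ : ∃ x, f x ≠ x := by
    by_contra! hfix
    exact hf (Equiv.ext hfix)
  refine ⟨⟨x, hx, fun y _ => h x y⟩, Finset.eq_univ_of_forall fun y => mem_support.mpr ?_⟩
  intro hy
  exact hx ((h y x).eq_of_left hy ▸ hy)

end Equiv.Perm

theorem stmt7_general {n : ℕ} (f : Equiv.Perm (Fin n))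
    (hne : f ≠ 1) (hnc : ¬ IsFullCycle f) :
    ∃ P : Set (Set (Fin n)), Setoid.IsPartition P ∧ NontrivialPart P ∧ InSPart P f := by
  obtain ⟨x, hx⟩ : ∃ x, f x ≠ x := by
    by_contra! hfix
    exact hne (Equiv.ext hfix)
  obtain ⟨z, w, hzw⟩ : ∃ z w, ¬ f.SameCycle z w := by
    by_contra! hall
    exact hnc (Equiv.Perm.isCycle_and_support_eq_univ_of_forall_sameCycle hne hall)
  refine ⟨(Equiv.Perm.SameCycle.setoid f).classes, Setoid.isPartition_classes _,
    Setoid.nontrivialPart_classes hx ?_ hzw, Equiv.Perm.inSPart_sameCycle_classes f⟩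
  exact Equiv.Perm.sameCycle_apply_left.mpr (Equiv.Perm.SameCycle.refl f x)

theorem stmt7 {n : ℕ} (hn : 3 ≤ n) (f : Equiv.Perm (Fin n))
    (hne : f ≠ 1) (hnc : ¬ IsFullCycle f) :
    ∃ P : Set (Set (Fin n)), Setoid.IsPartition P ∧ NontrivialPart P ∧ InSPart P f :=
  stmt7_general f hne hnc
end

section
/- Let f ∈ S_n be an n-cycle on X = {1,...,n}, and let m be an integer with 1 < m < n. Then m divides n if and only if there exists a nontrivial m-block partition P of X such that f ∈ S(X,P). -/
/-! An `n`-cycle is conjugate to the rotation `i ↦ i + 1` of `ℤ/n`. If `m ∣ n`, the fibres of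
the reduction `ℤ/n → ℤ/m` are `m` blocks which the rotation permutes cyclically. Conversely, a
partition preserved by `f` is a block system for the transitive group `⟨f⟩`, so all blocks are
translates of one block and `n` is the size of a block times the number of blocks. -/

open Function Pointwise MulAction

def fibers {α β : Type*} (g : α → β) : Set (Set α) :=
  Set.range fun i => g ⁻¹' {i}

section Fibers

variable {α β : Type*} {g : α → β}

theorem isPartition_fibers (hg : Surjective g) : Setoid.IsPartition (fibers g) := by
  refine ⟨?_, fun x => ⟨g ⁻¹' {g x}, ⟨⟨g x, rfl⟩, rfl⟩, ?_⟩⟩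
  · rintro ⟨i, hi⟩
    obtain ⟨x, rfl⟩ := hg i
    exact (Set.eq_empty_iff_forall_notMem.mp hi) x rfl
  · rintro _ ⟨⟨i, rfl⟩, hx⟩
    rw [hx]

theorem ncard_fibers (hg : Surjective g) : (fibers g).ncard = Nat.card β :=
  Set.ncard_range_of_injective <| (Set.preimage_injective.mpr hg).comp Set.singleton_injective

theorem preservesPart_fibers {f : α → α} {σ : β → β} (h : Semiconj g f σ) :
    PreservesPart (fibers g) f := by
  rintro _ ⟨i, rfl⟩
  refine ⟨g ⁻¹' {σ i}, ⟨σ i, rfl⟩, ?_⟩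
  rintro _ ⟨x, hx, rfl⟩
  exact (h x).trans (congrArg σ hx)

theorem inSPart_fibers {f : Equiv.Perm α} {σ : Equiv.Perm β} (h : Semiconj g f σ) :
    InSPart (fibers g) f :=
  ⟨preservesPart_fibers h,
    preservesPart_fibers <| h.inverses_right f.apply_symm_apply σ.symm_apply_apply⟩

end Fibers

namespace InSPart

variable {α : Type*} {P : Set (Set α)} {f : Equiv.Perm α}

theorem inv (hf : InSPart P f) : InSPart P f⁻¹ :=
  ⟨hf.2, hf.1⟩

theorem image_mem (hP : Setoid.IsPartition P) (hf : InSPart P f) {b : Set α} (hb : b ∈ P) :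
    f '' b ∈ P := by
  obtain ⟨b', hb', hfb⟩ := hf.1 b hb
  obtain ⟨b'', hb'', hfb'⟩ := hf.2 b' hb'
  have hbb'' : b ⊆ b'' := fun x hx => by
    simpa using hfb' ⟨f x, hfb ⟨x, hx, rfl⟩, rfl⟩
  have hb_eq : b = b'' := hP.pairwiseDisjoint.elim hb hb'' <| by
    obtain ⟨x, hx⟩ := Setoid.nonempty_of_mem_partition hP hb
    exact Set.not_disjoint_iff.mpr ⟨x, hx, hbb'' hx⟩
  suffices f '' b = b' from this ▸ hb'
  refine hfb.antisymm fun y hy => ⟨f.symm y, ?_, f.apply_symm_apply y⟩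
  exact hb_eq ▸ hfb' ⟨y, hy, rfl⟩

theorem smul_subset (hP : Setoid.IsPartition P) (hf : InSPart P f) : f • P ⊆ P := by
  rintro _ ⟨b, hb, rfl⟩
  simpa [← Set.image_smul, Equiv.Perm.smul_def] using hf.image_mem hP hb

theorem zpowers_le_stabilizer (hP : Setoid.IsPartition P) (hf : InSPart P f) :
    Subgroup.zpowers f ≤ stabilizer (Equiv.Perm α) P :=
  Subgroup.zpowers_le.mpr <|
    (hf.smul_subset hP).antisymm <| Set.subset_smul_set_iff.mpr (hf.inv.smul_subset hP)

end InSPart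

theorem Setoid.IsPartition.ncard_dvd_card_of_smul_eq {G X : Type*} [Group G] [MulAction G X]
    [IsPretransitive G X] {P : Set (Set X)} (hP : Setoid.IsPartition P)
    (hG : ∀ g : G, g • P = P) : P.ncard ∣ Nat.card X := by
  have hmem : ∀ (g : G) {b}, b ∈ P → g • b ∈ P := fun g b hb =>
    hG g ▸ Set.smul_mem_smul_set hb
  rcases isEmpty_or_nonempty X with hX | ⟨⟨x⟩⟩
  · simp
  obtain ⟨b, ⟨hb, hxb⟩, -⟩ := hP.2 x
  have hblock : IsBlock G b := fun g₁ g₂ hne =>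
    hP.pairwiseDisjoint (hmem g₁ hb) (hmem g₂ hb) hne
  have horbit : orbit G b = P := by
    refine (Set.range_subset_iff.mpr fun g => hmem g hb).antisymm fun c hc => ?_
    obtain ⟨y, hy⟩ := Setoid.nonempty_of_mem_partition hP hc
    obtain ⟨g, rfl⟩ := exists_smul_eq G x y
    refine ⟨g, hP.pairwiseDisjoint.elim (hmem g hb) hc ?_⟩
    exact Set.not_disjoint_iff.mpr ⟨g • x, Set.smul_mem_smul_set hxb, hy⟩
  rw [← horbit]
  exact Dvd.intro_left _ (hblock.ncard_block_mul_ncard_orbit_eq ⟨x, hxb⟩)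

namespace IsFullCycle

variable {n : ℕ} {f : Equiv.Perm (Fin n)}

theorem isPretransitive_zpowers (hf : IsFullCycle f) :
    IsPretransitive (Subgroup.zpowers f) (Fin n) := by
  refine ⟨fun x y => ?_⟩
  have hmoved : ∀ z, f z ≠ z := fun z => Equiv.Perm.mem_support.mp (hf.2 ▸ Finset.mem_univ z)
  obtain ⟨i, hi⟩ := hf.1.exists_zpow_eq (hmoved x) (hmoved y)
  exact ⟨⟨f ^ i, Subgroup.zpow_mem_zpowers f i⟩, hi⟩

open Fin.CommRing in
theorem exists_surjective_semiconj_addRight_one {m : ℕ} (hf : IsFullCycle f) (hmn : m ∣ n) :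
    ∃ g : Fin n → ZMod m, Surjective g ∧ Semiconj g f (Equiv.addRight 1) := by
  have hn : 2 ≤ n := by
    simpa [hf.2] using hf.1.two_le_card_support
  have : NeZero n := ⟨by omega⟩
  obtain ⟨c, rfl⟩ : ∃ c, c * finRotate n * c⁻¹ = f := isConj_iff.mp <|
    Equiv.Perm.isConj_iff_cycleType_eq.mpr <| by
      rw [cycleType_finRotate_of_le hn, hf.1.cycleType, hf.2, Finset.card_univ, Fintype.card_fin]
  let φ : Fin n →+* ZMod m := (ZMod.castHom hmn (ZMod m)).comp (ZMod.finEquiv n).toRingHom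
  refine ⟨φ ∘ ⇑c⁻¹, (ZMod.castHom_surjective hmn).comp
    ((ZMod.finEquiv n).surjective.comp c⁻¹.surjective), fun x => ?_⟩
  simp [finRotate_apply, map_add, map_one]

end IsFullCycle

theorem stmt8_general {n : ℕ} (f : Equiv.Perm (Fin n)) (hf : IsFullCycle f)
    (m : ℕ) :
    m ∣ n ↔ ∃ P : Set (Set (Fin n)), Setoid.IsPartition P ∧ P.ncard = m ∧ InSPart P f := by
  constructor
  · intro hmn
    obtain ⟨g, hg, hgf⟩ := hf.exists_surjective_semiconj_addRight_one hmn
    exact ⟨fibers g, isPartition_fibers hg, by rw [ncard_fibers hg, Nat.card_zmod],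
      inSPart_fibers hgf⟩
  · rintro ⟨P, hP, rfl, hPf⟩
    have := hf.isPretransitive_zpowers
    have hG : ∀ g : Subgroup.zpowers f, g • P = P := fun g =>
      hPf.zpowers_le_stabilizer hP g.2
    simpa using hP.ncard_dvd_card_of_smul_eq hG

theorem stmt8 {n : ℕ} (f : Equiv.Perm (Fin n)) (hf : IsFullCycle f)
    (m : ℕ) (hm1 : 1 < m) (hmn : m < n) :
    m ∣ n ↔ ∃ P : Set (Set (Fin n)), Setoid.IsPartition P ∧ P.ncard = m ∧ InSPart P f :=
  stmt8_general f hf m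
end

section
/- Let P = {X_1,...,X_m} be an m-block partition of X and f ∈ S(X,P) an n-cycle (where |X| = n). Then the character χ^(f) is an m-cycle on {1,...,m}. -/
theorem stmt10 {n m : ℕ} (B : Fin m → Set (Fin n)) (hP : IsPartition B)
    (f : Equiv.Perm (Fin n)) (hf : InS B ⇑f) (hcyc : IsFullCycle f)
    (c : Fin m → Fin m) (hc : IsChar B ⇑f c) :
    Function.Bijective c ∧ ∀ i j : Fin m, ∃ t : ℕ, c^[t] i = j := by
  obtain ⟨hne, hdisj, hcov⟩ := hP
  have huniq : ∀ x i j, x ∈ B i → x ∈ B j → i = j := by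
    intro x i j hi hj
    by_contra h
    exact (hdisj h).ne_of_mem hi hj rfl
  have hstep : ∀ x i, x ∈ B i → f x ∈ B (c i) := fun x i hx => hc i ⟨x, hx, rfl⟩
  have hiter : ∀ (t : ℕ) x i, x ∈ B i → (⇑f)^[t] x ∈ B (c^[t] i) := by
    intro t
    induction t with
    | zero => simp
    | succ t ih =>
      intro x i hx
      rw [Function.iterate_succ_apply', Function.iterate_succ_apply']
      exact hstep _ _ (ih x i hx)
  have htrans : ∀ i j : Fin m, ∃ t : ℕ, c^[t] i = j := by
    intro i j
    obtain ⟨x, hx⟩ := hne i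
    obtain ⟨y, hy⟩ := hne j
    have hfx : f x ≠ x := Equiv.Perm.mem_support.mp (hcyc.2 ▸ Finset.mem_univ x)
    have hfy : f y ≠ y := Equiv.Perm.mem_support.mp (hcyc.2 ▸ Finset.mem_univ y)
    obtain ⟨t, ht⟩ := hcyc.1.exists_pow_eq hfx hfy
    have hmem := hiter t x i hx
    rw [Equiv.Perm.iterate_eq_pow, ht] at hmem
    exact ⟨t, huniq y _ _ hmem hy⟩
  have hsurj : Function.Surjective c := by
    intro i
    obtain ⟨t, ht⟩ := htrans (c i) i
    cases t with
    | zero => exact ⟨i, ht⟩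
    | succ t =>
      refine ⟨c^[t] (c i), ?_⟩
      rw [Function.iterate_succ_apply'] at ht
      exact ht
  exact ⟨⟨Finite.injective_iff_surjective.mpr hsurj, hsurj⟩, htrans⟩
end

section
/- Let P = {X_1,...,X_m} be a partition of X = {1,...,n} and f ∈ S(X,P) an n-cycle. Then P is a uniform partition, i.e., all blocks of P have the same size. -/
theorem stmt11 {n m : ℕ} (B : Fin m → Set (Fin n)) (hP : IsPartition B)
    (f : Equiv.Perm (Fin n)) (hf : InS B ⇑f) (hcyc : IsFullCycle f) :
    ∀ i j : Fin m, (B i).ncard = (B j).ncard := by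
  obtain ⟨hne, hdis, hcov⟩ := hP
  obtain ⟨g, hgf, hfg, hfT, hgT⟩ := hf
  have huniq : ∀ {i j : Fin m} {x : Fin n}, x ∈ B i → x ∈ B j → i = j := by
    intro i j x hi hj
    by_contra h
    exact Set.disjoint_left.mp (hdis h) hi hj
  choose c hc using hfT
  choose d hd using hgT
  have himg : ∀ i, ⇑f '' B i = B (c i) := by
    intro i
    refine subset_antisymm (hc i) ?_
    intro y hy
    have h1 : g y ∈ B (d (c i)) := hd (c i) ⟨y, hy, rfl⟩
    obtain ⟨x, hx⟩ := hne i
    have hfx : f x ∈ B (c i) := hc i ⟨x, hx, rfl⟩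
    have h2 : g (f x) ∈ B (d (c i)) := hd (c i) ⟨f x, hfx, rfl⟩
    rw [hgf x] at h2
    have he : d (c i) = i := huniq h2 hx
    rw [he] at h1
    exact ⟨g y, h1, hfg y⟩
  have hpow : ∀ (k : ℕ) (i : Fin m), (⇑(f ^ k)) '' B i = B (c^[k] i) := by
    intro k
    induction k with
    | zero => intro i; simp
    | succ k ih =>
      intro i
      have h3 : (f ^ (k+1) : Equiv.Perm (Fin n)) = f ^ k * f := pow_succ f k
      rw [h3]
      have h4 : ⇑(f ^ k * f) = ⇑(f ^ k) ∘ ⇑f := rfl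
      rw [h4, Set.image_comp, himg i, ih (c i), Function.iterate_succ]
      rfl
  intro i j
  obtain ⟨x, hx⟩ := hne i
  obtain ⟨y, hy⟩ := hne j
  obtain ⟨hcy, hsup⟩ := hcyc
  have hxne : f x ≠ x := by
    have := Finset.mem_univ x
    rw [← hsup, Equiv.Perm.mem_support] at this
    exact this
  have hyne : f y ≠ y := by
    have := Finset.mem_univ y
    rw [← hsup, Equiv.Perm.mem_support] at this
    exact this
  obtain ⟨a, hane, ha⟩ := hcy
  have hsc : f.SameCycle x y := (ha hxne).symm.trans (ha hyne)
  obtain ⟨k, -, hk⟩ := hsc.exists_pow_eq'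
  have hmem : y ∈ B (c^[k] i) := by
    rw [← hpow k i]; exact ⟨x, hx, hk⟩
  have hij : c^[k] i = j := huniq hmem hy
  have hcard : (B i).ncard = (B (c^[k] i)).ncard := by
    rw [← hpow k i, Set.ncard_image_of_injective _ (f ^ k).injective]
  rw [hij] at hcard
  exact hcard
end
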